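/- Define a sequence of Laurent polynomials by the recursion f(0, n) = 1 for all n, and f(m, n) = t² · f(m-1, n) + t^{2n-1+1} - t^{2n+1+1} for m > 0, f(m, n) = t^{-2} · f(m+1, n) + (−1)·(t^{2n-1-1} − t^{2n+1-1}) for m < 0. Then f(m, n) = t^{2m} + t^{2n} - t^{2m+2n} for all integers m and all integers n. -/

import Mathlib

/-!
The closed form `T (2m) + T (2n) - T (2m + 2n)` equals `1` at `m = 0` and satisfies both
recursions (after multiplying out, `T 2 * T (2m - 2) = T (2m)` and the remaining monomials
cancel). A function on `ℤ` is determined by its value at `0` and a recursion expressing each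
value through its neighbour towards `0`, so `f` agrees with the closed form.
-/

open LaurentPolynomial

theorem Int.eq_of_eq_zero_of_recursion {α : Type*} {u v : ℤ → α} (F G : ℤ → α → α)
    (h0 : u 0 = v 0)
    (hu_pos : ∀ m, 0 < m → u m = F m (u (m - 1))) (hv_pos : ∀ m, 0 < m → v m = F m (v (m - 1)))
    (hu_neg : ∀ m, m < 0 → u m = G m (u (m + 1))) (hv_neg : ∀ m, m < 0 → v m = G m (v (m + 1))) :
    u = v := by
  funext m
  induction m using Int.induction_on with
  | zero => exact h0
  | succ k ih =>
    have hk : (0 : ℤ) < k + 1 := by omega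
    rw [hu_pos _ hk, hv_pos _ hk, add_sub_cancel_right, ih]
  | pred k ih =>
    have hk : -(k : ℤ) - 1 < 0 := by omega
    rw [hu_neg _ hk, hv_neg _ hk, sub_add_cancel, ih]

theorem closedForm_zero (n : ℤ) :
    T (2 * 0) + T (2 * n) - T (2 * 0 + 2 * n) = (1 : LaurentPolynomial ℤ) := by
  simp

theorem closedForm_pos_step (m n : ℤ) :
    T (2 * m) + T (2 * n) - T (2 * m + 2 * n) = (T 2 *
      (T (2 * (m - 1)) + T (2 * n) - T (2 * (m - 1) + 2 * n)) + T (2 * n - 1 + 1) -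
      T (2 * n + 1 + 1) : LaurentPolynomial ℤ) := by
  simp only [mul_add, mul_sub, ← T_add]
  ring_nf

theorem closedForm_neg_step (m n : ℤ) :
    T (2 * m) + T (2 * n) - T (2 * m + 2 * n) = (T (-2) *
      (T (2 * (m + 1)) + T (2 * n) - T (2 * (m + 1) + 2 * n)) +
      (-1) * (T (2 * n - 1 - 1) - T (2 * n + 1 - 1)) : LaurentPolynomial ℤ) := by
  simp only [mul_add, mul_sub, ← T_add]
  ring_nf

theorem stmt_7 (f : ℤ → ℤ → LaurentPolynomial ℤ)
    (h0 : ∀ n : ℤ, f 0 n = 1)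
    (hpos : ∀ m n : ℤ, 0 < m →
      f m n = T 2 * f (m - 1) n + T (2 * n - 1 + 1) - T (2 * n + 1 + 1))
    (hneg : ∀ m n : ℤ, m < 0 →
      f m n = T (-2) * f (m + 1) n + (-1) * (T (2 * n - 1 - 1) - T (2 * n + 1 - 1))) :
    ∀ m n : ℤ, f m n = T (2 * m) + T (2 * n) - T (2 * m + 2 * n) := by
  intro m n
  have h := Int.eq_of_eq_zero_of_recursion (u := fun m ↦ f m n)
    (v := fun m ↦ T (2 * m) + T (2 * n) - T (2 * m + 2 * n))
    (fun _ p ↦ T 2 * p + T (2 * n - 1 + 1) - T (2 * n + 1 + 1))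
    (fun _ p ↦ T (-2) * p + (-1) * (T (2 * n - 1 - 1) - T (2 * n + 1 - 1)))
    ((h0 n).trans (closedForm_zero n).symm)
    (fun m hm ↦ hpos m n hm) (fun m _ ↦ closedForm_pos_step m n)
    (fun m hm ↦ hneg m n hm) (fun m _ ↦ closedForm_neg_step m n)
  exact congrFun h m
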